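/- arXiv:1612.08532 — 5 statements merged into one kernel-verified Lean document; each statement's English description precedes it below -/
import Mathlib

section
/- For any 1-periodic function ψ: ℝ → ℝ of class C², the maximum of |ψ'| satisfies 2‖ψ'‖_∞ ≤ ‖ψ''‖_∞. -/
open Real Set

/-- For any 1-periodic C² function ψ : ℝ → ℝ, one has 2‖ψ'‖_∞ ≤ ‖ψ''‖_∞. -/
theorem periodic_deriv_sup_bound (ψ : ℝ → ℝ) (hψ : ContDiff ℝ 2 ψ)
    (hper : Function.Periodic ψ 1) :
    2 * (⨆ x : ℝ, |deriv ψ x|) ≤ ⨆ x : ℝ, |deriv (deriv ψ) x| := by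
  rw [show (2 : WithTop ℕ∞) = 1 + 1 from rfl, contDiff_succ_iff_deriv] at hψ
  obtain ⟨hdψ, -, h1⟩ := hψ
  rw [contDiff_one_iff_deriv] at h1
  obtain ⟨hdφ, h0c⟩ := h1
  set φ := deriv ψ with hφdef
  set φ' := deriv φ with hφ'def
  have hφ'c : Continuous φ' := h0c
  -- periodicity of φ and φ'
  have hφper : Function.Periodic φ 1 := by
    intro x
    have : (fun y => ψ (y + 1)) = ψ := funext fun y => hper y
    calc φ (x + 1) = deriv (fun y => ψ (y + 1)) x := by
          rw [deriv_comp_add_const]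
      _ = φ x := by rw [this]
  have hφ'per : Function.Periodic φ' 1 := by
    intro x
    have : (fun y => φ (y + 1)) = φ := funext fun y => hφper y
    calc φ' (x + 1) = deriv (fun y => φ (y + 1)) x := by
          rw [deriv_comp_add_const]
      _ = φ' x := by rw [this]
  set M := ⨆ x : ℝ, |φ' x| with hMdef
  have habsper : Function.Periodic (fun x => |φ' x|) 1 := fun x => by
    simp [hφ'per x]
  have hbdd : BddAbove (Set.range fun x => |φ' x|) := by
    rw [← habsper.image_Icc one_pos 0]
    exact (isCompact_Icc.image (hφ'c.abs)).bddAbove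
  have hM : ∀ x, |φ' x| ≤ M := fun x => le_ciSup hbdd x
  have hM0 : 0 ≤ M := (abs_nonneg _).trans (hM 0)
  -- ψ' vanishes somewhere
  obtain ⟨c, -, hc⟩ := exists_deriv_eq_zero (f := ψ) one_pos
    hdψ.continuous.continuousOn (by rw [← hper 0, zero_add])
  have hc1 : φ (c + 1) = 0 := by rw [hφper c]; exact hc
  -- key bound on [c, c+1]
  have key : ∀ x ∈ Icc c (c + 1), |φ x| ≤ M / 2 := by
    intro x hx
    have hderiv : ∀ a b : ℝ, ∀ y ∈ Icc a b, HasDerivWithinAt φ (φ' y) (Icc a b) y :=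
      fun a b y _ => ((hdφ y).hasDerivAt).hasDerivWithinAt
    have b1 : |φ x - φ c| ≤ M * (x - c) := by
      have := norm_image_sub_le_of_norm_deriv_le_segment'
        (hderiv c (c + 1)) (fun y _ => hM y) x hx
      simpa using this
    have b2 : |φ (c + 1) - φ x| ≤ M * (c + 1 - x) := by
      have := norm_image_sub_le_of_norm_deriv_le_segment'
        (hderiv x (c + 1)) (fun y _ => hM y) (c + 1)
        (right_mem_Icc.2 hx.2)
      simpa using this
    rw [show φ c = 0 from hc, sub_zero] at b1
    rw [hc1] at b2
    rw [abs_sub_comm, sub_zero] at b2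
    obtain hx2 | hx2 := le_total x (c + 1/2)
    · have : M * (x - c) ≤ M / 2 := by nlinarith
      linarith
    · have : M * (c + 1 - x) ≤ M / 2 := by nlinarith
      linarith
  have hall : ∀ x, |φ x| ≤ M / 2 := by
    intro x
    obtain ⟨y, hy, hxy⟩ := hφper.exists_mem_Ioc one_pos x c
    rw [hxy]
    exact key y (Ioc_subset_Icc_self hy)
  have : (⨆ x : ℝ, |φ x|) ≤ M / 2 := Real.iSup_le hall (by positivity)
  linarith
end

section
/- Any non-graph admissible curve γ satisfies E[γ] > min{1, (π²ε² + 1)α}. -/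
/-!
Write the velocity as the complex function `z = x' + i y'`, nonvanishing on `[0, 1]`.
Integrating its logarithmic derivative `z'/z` gives a tangent angle `θ` with
`|θ'| ≤ |κ| |γ'|`, and `z 0 = z 1` forces `θ 1 - θ 0 ∈ 2πℤ`. If the total curvature were
below `π`, then `θ 1 = θ 0` and every tangent direction stays within `π/2` of the one at a
point `t₀` with `x'(t₀) ≤ 0`; then `Re (∫ z · conj z(t₀)) > 0`, which contradicts `∫ z = 1`.
So `∫ |κ| ds ≥ π`, while `L > 1` because `x' < |γ'|` at `t₀`. The pointwise bound
`κ² ≥ 2cκ - c²` with `c = πα` then gives `E > (π²ε² + 1)α` when `αL ≤ 1`, and otherwise the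
contact energy alone is at least `αL > 1`.
-/

open MeasureTheory Real Set

noncomputable section

/-- The (signed) curvature of a planar curve `γ` at parameter `t`. -/
def curvature (γ : ℝ → ℝ × ℝ) (t : ℝ) : ℝ :=
  ((deriv γ t).1 * (deriv (deriv γ) t).2 - (deriv γ t).2 * (deriv (deriv γ) t).1)
    / ‖deriv γ t‖ ^ 3

/-- Admissible curves above the substrate ψ: regular curves of Sobolev class H²
(modelled as C²) confined in the closed epigraph of ψ, satisfying the periodic
boundary conditions x(0)=0, x(1)=1, y(0)=y(1), γ'(0)=γ'(1). -/
def Admissible (ψ : ℝ → ℝ) (γ : ℝ → ℝ × ℝ) : Prop :=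
  ContDiff ℝ 2 γ ∧ (∀ t ∈ Icc (0:ℝ) 1, deriv γ t ≠ 0) ∧
  (∀ t ∈ Icc (0:ℝ) 1, ψ (γ t).1 ≤ (γ t).2) ∧
  (γ 0).1 = 0 ∧ (γ 1).1 = 1 ∧ (γ 0).2 = (γ 1).2 ∧ deriv γ 0 = deriv γ 1

/-- The contact potential: Θ = α on the graph of ψ, Θ = 1 off it. -/
def contactPotential (ψ : ℝ → ℝ) (α : ℝ) (p : ℝ × ℝ) : ℝ :=
  if p.2 = ψ p.1 then α else 1

/-- Total energy of one period: E[γ] = ∫ [ε²κ² + Θ(γ)] ds. -/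
def Energy (ψ : ℝ → ℝ) (α ε : ℝ) (γ : ℝ → ℝ × ℝ) : ℝ :=
  ∫ t in Icc (0:ℝ) 1, (ε ^ 2 * curvature γ t ^ 2 + contactPotential ψ α (γ t)) * ‖deriv γ t‖

/-- Length of one period of the curve. -/
def Length (γ : ℝ → ℝ × ℝ) : ℝ := ∫ t in Icc (0:ℝ) 1, ‖deriv γ t‖

/-- A curve is a graph curve if x'(t) > 0 for all t. -/
def IsGraph (γ : ℝ → ℝ × ℝ) : Prop := ∀ t ∈ Icc (0:ℝ) 1, 0 < (deriv γ t).1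

open scoped ComplexConjugate

theorem two_mul_abs_intervalIntegral_le_of_integral_eq_zero {w : ℝ → ℝ} {a b s t : ℝ}
    (hw : IntervalIntegrable w volume a b) (h0 : ∫ x in a..b, w x = 0)
    (hs : s ∈ Icc a b) (ht : t ∈ Icc a b) :
    2 * |∫ x in s..t, w x| ≤ ∫ x in a..b, |w x| := by
  wlog hst : s ≤ t generalizing s t
  · rw [intervalIntegral.integral_symm, abs_neg]
    exact this ht hs (le_of_not_ge hst)
  have hi : ∀ {c d}, c ∈ Icc a b → d ∈ Icc a b → IntervalIntegrable w volume c d :=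
    fun hc hd => hw.mono_set (uIcc_subset_uIcc (Icc_subset_uIcc hc) (Icc_subset_uIcc hd))
  have ha : a ∈ Icc a b := left_mem_Icc.2 (hs.1.trans hs.2)
  have hb : b ∈ Icc a b := right_mem_Icc.2 (hs.1.trans hs.2)
  have split : ∀ f : ℝ → ℝ, IntervalIntegrable f volume a s → IntervalIntegrable f volume s t →
      IntervalIntegrable f volume t b →
      ∫ x in a..b, f x = (∫ x in a..s, f x) + (∫ x in s..t, f x) + ∫ x in t..b, f x :=
    fun f h₁ h₂ h₃ => by
      rw [intervalIntegral.integral_add_adjacent_intervals h₁ h₂,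
        intervalIntegral.integral_add_adjacent_intervals (h₁.trans h₂) h₃]
  have hw_split := split w (hi ha hs) (hi hs ht) (hi ht hb)
  have habs_split := split (|w ·|) (hi ha hs).abs (hi hs ht).abs (hi ht hb).abs
  have h₁ := intervalIntegral.abs_integral_le_integral_abs (μ := volume) (f := w) hs.1
  have h₂ := intervalIntegral.abs_integral_le_integral_abs (μ := volume) (f := w) hst
  have h₃ := intervalIntegral.abs_integral_le_integral_abs (μ := volume) (f := w) ht.2
  have h₄ : |∫ x in s..t, w x| ≤ |∫ x in a..s, w x| + |∫ x in t..b, w x| := by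
    rw [show ∫ x in s..t, w x = -((∫ x in a..s, w x) + ∫ x in t..b, w x) by linarith, abs_neg]
    exact abs_add_le _ _
  linarith

theorem ContDiff.continuousOn_logDeriv {z : ℝ → ℂ} (hz : ContDiff ℝ 1 z) :
    ContinuousOn (logDeriv z) {t | z t ≠ 0} :=
  (hz.continuous_deriv le_rfl).continuousOn.div hz.continuous.continuousOn fun _ h => h

theorem eq_mul_exp_integral_logDeriv {z : ℝ → ℂ} (hz : ContDiff ℝ 1 z) {a b : ℝ}
    (hne : ∀ t ∈ Icc a b, z t ≠ 0) {t : ℝ} (ht : t ∈ Icc a b) :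
    z t = z a * Complex.exp (∫ s in a..t, logDeriv z s) := by
  set φ := fun t => ∫ s in a..t, logDeriv z s
  have hU : IsOpen {t | z t ≠ 0} := isOpen_ne_fun hz.continuous continuous_const
  have hcont := hz.continuousOn_logDeriv
  have hφ : ∀ x ∈ Icc a b, HasDerivAt φ (logDeriv z x) x := fun x hx =>
    intervalIntegral.integral_hasDerivAt_right
      (hcont.mono ((uIcc_subset_Icc (left_mem_Icc.2 (hx.1.trans hx.2)) hx).trans hne)
        |>.intervalIntegrable)
      (hcont.stronglyMeasurableAtFilter hU x (hne x hx))
      (hcont.continuousAt (hU.mem_nhds (hne x hx)))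
  have hconst : ∀ x ∈ Icc a b, HasDerivAt (fun x => z x * Complex.exp (-φ x)) 0 x := by
    intro x hx
    refine (((hz.differentiable one_ne_zero x).hasDerivAt).mul (hφ x hx).neg.cexp).congr_deriv ?_
    rw [logDeriv_apply]
    field_simp [hne x hx]
    ring
  have hconst_eq := constant_of_has_deriv_right_zero
    (fun x hx => (hconst x hx).continuousAt.continuousWithinAt)
    (fun x hx => (hconst x (Ico_subset_Icc_self hx)).hasDerivWithinAt) t ht
  simp only [φ, intervalIntegral.integral_same, neg_zero, Complex.exp_zero, mul_one] at hconst_eq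
  rw [← hconst_eq, mul_assoc, ← Complex.exp_add, neg_add_cancel, Complex.exp_zero, mul_one]

theorem re_mul_conj_pos_of_integral_abs_im_logDeriv_lt_pi {z : ℝ → ℂ} (hz : ContDiff ℝ 1 z)
    {a b : ℝ} (hne : ∀ t ∈ Icc a b, z t ≠ 0) (hab : z a = z b)
    (hturn : ∫ t in a..b, |(logDeriv z t).im| < π) {s t : ℝ} (hs : s ∈ Icc a b)
    (ht : t ∈ Icc a b) :
    0 < (z s * conj (z t)).re := by
  have ha : a ∈ Icc a b := left_mem_Icc.2 (hs.1.trans hs.2)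
  have hb : b ∈ Icc a b := right_mem_Icc.2 (hs.1.trans hs.2)
  have hcont : ContinuousOn (logDeriv z) (Icc a b) := hz.continuousOn_logDeriv.mono hne
  have hsub : ∀ {c}, c ∈ Icc a b → uIcc a c ⊆ Icc a b := fun hc =>
    uIcc_subset_Icc (left_mem_Icc.2 (hc.1.trans hc.2)) hc
  have hint : ∀ {c}, c ∈ Icc a b → IntervalIntegrable (logDeriv z) volume a c := fun hc =>
    (hcont.mono (hsub hc)).intervalIntegrable
  have hint_im : ∀ {c}, c ∈ Icc a b → IntervalIntegrable (fun y => (logDeriv z y).im) volume a c :=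
    fun hc => (Complex.continuous_im.comp_continuousOn (hcont.mono (hsub hc))).intervalIntegrable
  set φ := fun x => ∫ y in a..x, logDeriv z y
  have hφ_im : ∀ {c}, c ∈ Icc a b → (φ c).im = ∫ y in a..c, (logDeriv z y).im := fun hc =>
    (intervalIntegral.intervalIntegral_im (hint hc)).symm
  -- closing up forces the turning angle to be a multiple of `2π`, hence `0`
  have hturn_zero : ∫ y in a..b, (logDeriv z y).im = 0 := by
    have hexp : Complex.exp (φ b) = 1 := by
      have := eq_mul_exp_integral_logDeriv hz hne hb
      rw [← hab] at this
      exact (mul_eq_left₀ (hne a ha)).1 this.symm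
    obtain ⟨n, hn⟩ := Complex.exp_eq_one_iff.1 hexp
    have him : (φ b).im = 2 * π * n := by simp [hn]; ring
    have hle : |(φ b).im| < π := by
      rw [hφ_im hb]
      exact (intervalIntegral.abs_integral_le_integral_abs hb.1).trans_lt hturn
    have hn0 : n = 0 := by
      rw [him, abs_mul, abs_of_pos two_pi_pos] at hle
      have : |(n : ℝ)| < 1 := by nlinarith [pi_pos]
      rw [← Int.cast_abs] at this
      exact Int.abs_lt_one_iff.1 (by exact_mod_cast this)
    rw [← hφ_im hb, him, hn0]; simp
  have hangle : |(φ s).im - (φ t).im| < π / 2 := by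
    have := two_mul_abs_intervalIntegral_le_of_integral_eq_zero
      (hint_im hb) hturn_zero ht hs
    rw [hφ_im hs, hφ_im ht, intervalIntegral.integral_interval_sub_left (hint_im hs) (hint_im ht)]
    linarith
  have hprod : z s * conj (z t) =
      (Complex.normSq (z a) : ℂ) * Complex.exp (φ s + conj (φ t)) := by
    rw [eq_mul_exp_integral_logDeriv hz hne hs, eq_mul_exp_integral_logDeriv hz hne ht, map_mul,
      ← Complex.exp_conj, Complex.exp_add, ← Complex.mul_conj]
    ring
  rw [hprod, Complex.re_ofReal_mul, Complex.exp_re]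
  have hcos : 0 < Real.cos (φ s + conj (φ t)).im := by
    rw [Complex.add_im, Complex.conj_im, ← sub_eq_add_neg]
    exact cos_pos_of_mem_Ioo (abs_lt.1 (by linarith [hangle]))
  have := Complex.normSq_pos.2 (hne a ha)
  positivity

theorem pi_le_integral_abs_im_logDeriv {z : ℝ → ℂ} (hz : ContDiff ℝ 1 z) {a b : ℝ} (hlt : a < b)
    (hne : ∀ t ∈ Icc a b, z t ≠ 0) (hab : z a = z b) {t₀ : ℝ} (ht₀ : t₀ ∈ Icc a b)
    (hdir : (z t₀ * conj (∫ t in a..b, z t)).re ≤ 0) :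
    π ≤ ∫ t in a..b, |(logDeriv z t).im| := by
  by_contra! hturn
  have hcont : Continuous fun s => z s * conj (z t₀) := hz.continuous.mul continuous_const
  have hpos : 0 < ∫ s in a..b, (z s * conj (z t₀)).re :=
    intervalIntegral.intervalIntegral_pos_of_pos_on
      ((Complex.continuous_re.comp hcont).intervalIntegrable _ _)
      (fun s hs => re_mul_conj_pos_of_integral_abs_im_logDeriv_lt_pi hz hne hab hturn
        (Ioo_subset_Icc_self hs) ht₀) hlt
  have hre : ∫ s in a..b, (z s * conj (z t₀)).re = (z t₀ * conj (∫ t in a..b, z t)).re := by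
    rw [← Complex.conj_re, map_mul, Complex.conj_conj, mul_comm,
      ← intervalIntegral.integral_mul_const]
    exact intervalIntegral.intervalIntegral_re (hcont.intervalIntegrable _ _)
  linarith

def complexVelocity (γ : ℝ → ℝ × ℝ) (t : ℝ) : ℂ :=
  Complex.equivRealProdCLM.symm (deriv γ t)

def totalCurvature (γ : ℝ → ℝ × ℝ) : ℝ := ∫ t in Icc (0:ℝ) 1, |curvature γ t| * ‖deriv γ t‖

def bendingEnergy (γ : ℝ → ℝ × ℝ) : ℝ := ∫ t in Icc (0:ℝ) 1, curvature γ t ^ 2 * ‖deriv γ t‖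

def contactEnergy (ψ : ℝ → ℝ) (α : ℝ) (γ : ℝ → ℝ × ℝ) : ℝ :=
  ∫ t in Icc (0:ℝ) 1, contactPotential ψ α (γ t) * ‖deriv γ t‖

@[simp]
theorem complexVelocity_re (γ : ℝ → ℝ × ℝ) (t : ℝ) : (complexVelocity γ t).re = (deriv γ t).1 :=
  rfl

theorem deriv_complexVelocity (γ : ℝ → ℝ × ℝ) (t : ℝ) :
    deriv (complexVelocity γ) t = Complex.equivRealProdCLM.symm (deriv (deriv γ) t) := by
  rw [← fderiv_apply_one_eq_deriv, ← fderiv_apply_one_eq_deriv]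
  exact congrArg (· 1) (Complex.equivRealProdCLM.symm.comp_fderiv (f := deriv γ) (x := t))

theorem complexVelocity_ne_zero {γ : ℝ → ℝ × ℝ} {t : ℝ} (h : deriv γ t ≠ 0) :
    complexVelocity γ t ≠ 0 :=
  (map_ne_zero_iff _ Complex.equivRealProdCLM.symm.injective).2 h

theorem ContDiff.complexVelocity {γ : ℝ → ℝ × ℝ} (hγ : ContDiff ℝ 2 γ) :
    ContDiff ℝ 1 (complexVelocity γ) :=
  Complex.equivRealProdCLM.symm.contDiff.comp (hγ.deriv' (n := 1))

theorem integral_complexVelocity {γ : ℝ → ℝ × ℝ} (hγ : ContDiff ℝ 1 γ) (a b : ℝ) :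
    ∫ t in a..b, complexVelocity γ t = Complex.equivRealProdCLM.symm (γ b - γ a) := by
  have hint : IntervalIntegrable (deriv γ) volume a b :=
    (hγ.continuous_deriv le_rfl).intervalIntegrable a b
  rw [← intervalIntegral.integral_deriv_eq_sub (fun t _ => hγ.differentiable one_ne_zero t) hint]
  exact (Complex.equivRealProdCLM.symm : ℝ × ℝ →L[ℝ] ℂ).intervalIntegral_comp_comm hint

-- `‖deriv γ t‖` is the sup norm on `ℝ × ℝ`, which is at most the modulus of `complexVelocity γ t`.
theorem abs_im_logDeriv_complexVelocity_le (γ : ℝ → ℝ × ℝ) {t : ℝ} (ht : deriv γ t ≠ 0) :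
    |(logDeriv (complexVelocity γ) t).im| ≤ |curvature γ t| * ‖deriv γ t‖ := by
  set F := deriv γ t
  set G := deriv (deriv γ) t
  have hv : 0 < ‖F‖ := norm_pos_iff.2 ht
  have hr : ‖F‖ ^ 2 ≤ F.1 ^ 2 + F.2 ^ 2 := by
    rw [Prod.norm_def, Real.norm_eq_abs, Real.norm_eq_abs]
    rcases max_choice |F.1| |F.2| with h | h <;> rw [h, sq_abs] <;> nlinarith
  have him :
      (logDeriv (complexVelocity γ) t).im = (F.1 * G.2 - F.2 * G.1) / (F.1 ^ 2 + F.2 ^ 2) := by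
    rw [logDeriv_apply, deriv_complexVelocity, Complex.div_im]
    simp [complexVelocity, Complex.normSq_apply, F, G]
    ring
  have hκ : |curvature γ t| * ‖F‖ = |F.1 * G.2 - F.2 * G.1| / ‖F‖ ^ 2 := by
    change |(F.1 * G.2 - F.2 * G.1) / ‖F‖ ^ 3| * ‖F‖ = _
    rw [abs_div, abs_pow, abs_norm]
    field_simp
  rw [him, hκ, abs_div, abs_of_pos ((pow_pos hv 2).trans_le hr)]
  exact div_le_div_of_nonneg_left (abs_nonneg _) (pow_pos hv 2) hr

theorem two_mul_integral_abs_mul_sub_le_integral_sq_mul {X : Type*} [MeasurableSpace X]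
    {μ : Measure X} {f g : X → ℝ} (hg : 0 ≤ᵐ[μ] g) (hfg : Integrable (fun x => |f x| * g x) μ)
    (hf2g : Integrable (fun x => f x ^ 2 * g x) μ) (hgi : Integrable g μ) (c : ℝ) :
    2 * c * ∫ x, |f x| * g x ∂μ - c ^ 2 * ∫ x, g x ∂μ ≤ ∫ x, f x ^ 2 * g x ∂μ := by
  rw [← integral_const_mul, ← integral_const_mul,
    ← integral_sub (hfg.const_mul _) (hgi.const_mul _)]
  refine integral_mono_ae ((hfg.const_mul _).sub (hgi.const_mul _)) hf2g ?_
  filter_upwards [hg] with x (hx : 0 ≤ g x)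
  nlinarith [mul_nonneg (sq_nonneg (|f x| - c)) hx, sq_abs (f x)]

theorem le_contactPotential {ψ : ℝ → ℝ} {α : ℝ} (h : α ≤ 1) (p : ℝ × ℝ) :
    α ≤ contactPotential ψ α p := by
  unfold contactPotential; split_ifs <;> linarith

theorem abs_contactPotential_le (ψ : ℝ → ℝ) (α : ℝ) (p : ℝ × ℝ) :
    |contactPotential ψ α p| ≤ max |α| 1 := by
  unfold contactPotential; split_ifs <;> simp

theorem measurable_contactPotential {ψ : ℝ → ℝ} (hψ : Continuous ψ) (α : ℝ) :
    Measurable (contactPotential ψ α) :=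
  Measurable.ite (isClosed_eq continuous_snd (hψ.comp continuous_fst)).measurableSet
    measurable_const measurable_const

theorem bendingEnergy_nonneg (γ : ℝ → ℝ × ℝ) : 0 ≤ bendingEnergy γ :=
  integral_nonneg fun _ => by positivity

theorem exists_deriv_fst_nonpos_of_not_isGraph {γ : ℝ → ℝ × ℝ} (hng : ¬ IsGraph γ) :
    ∃ t ∈ Icc (0:ℝ) 1, (deriv γ t).1 ≤ 0 := by
  by_contra! h
  exact hng h

namespace Admissible

variable {ψ : ℝ → ℝ} {γ : ℝ → ℝ × ℝ}

theorem contDiff (hγ : Admissible ψ γ) : ContDiff ℝ 2 γ := hγ.1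

theorem deriv_ne_zero (hγ : Admissible ψ γ) : ∀ t ∈ Icc (0:ℝ) 1, deriv γ t ≠ 0 := hγ.2.1

theorem deriv_zero_eq_deriv_one (hγ : Admissible ψ γ) : deriv γ 0 = deriv γ 1 := hγ.2.2.2.2.2.2

theorem continuous_deriv (hγ : Admissible ψ γ) : Continuous (deriv γ) :=
  hγ.contDiff.continuous_deriv (by norm_num)

theorem continuousOn_curvature (hγ : Admissible ψ γ) : ContinuousOn (curvature γ) (Icc 0 1) := by
  have hF := hγ.continuous_deriv
  have hG : Continuous (deriv (deriv γ)) := (hγ.contDiff.deriv' (n := 1)).continuous_deriv le_rfl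
  refine ContinuousOn.div (by fun_prop) (by fun_prop) fun t ht => ?_
  exact pow_ne_zero 3 (norm_ne_zero_iff.2 (hγ.deriv_ne_zero t ht))

theorem integrableOn_norm_deriv (hγ : Admissible ψ γ) :
    IntegrableOn (fun t => ‖deriv γ t‖) (Icc 0 1) :=
  hγ.continuous_deriv.norm.continuousOn.integrableOn_Icc

theorem integrableOn_abs_curvature_mul_norm (hγ : Admissible ψ γ) :
    IntegrableOn (fun t => |curvature γ t| * ‖deriv γ t‖) (Icc 0 1) :=
  (hγ.continuousOn_curvature.abs.mul
    hγ.continuous_deriv.norm.continuousOn).integrableOn_Icc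

theorem integrableOn_curvature_sq_mul_norm (hγ : Admissible ψ γ) :
    IntegrableOn (fun t => curvature γ t ^ 2 * ‖deriv γ t‖) (Icc 0 1) :=
  ((hγ.continuousOn_curvature.pow 2).mul
    hγ.continuous_deriv.norm.continuousOn).integrableOn_Icc

theorem integrableOn_contactPotential_mul_norm (hψ : Continuous ψ) (hγ : Admissible ψ γ)
    (α : ℝ) : IntegrableOn (fun t => contactPotential ψ α (γ t) * ‖deriv γ t‖) (Icc 0 1) :=
  hγ.integrableOn_norm_deriv.bdd_mul
    ((measurable_contactPotential hψ α).comp hγ.contDiff.continuous.measurable).aestronglyMeasurable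
    (ae_of_all _ fun t => abs_contactPotential_le ψ α (γ t))

theorem integral_complexVelocity (hγ : Admissible ψ γ) :
    ∫ t in (0:ℝ)..1, complexVelocity γ t = 1 := by
  obtain ⟨hC2, -, -, hx0, hx1, hy, -⟩ := hγ
  rw [_root_.integral_complexVelocity (hC2.of_le (by norm_num))]
  apply Complex.ext <;> simp [hx0, hx1, hy]

theorem one_lt_length (hγ : Admissible ψ γ) (hng : ¬ IsGraph γ) : 1 < Length γ := by
  obtain ⟨t₀, ht₀, hx⟩ := exists_deriv_fst_nonpos_of_not_isGraph hng
  have hF := hγ.continuous_deriv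
  have hx_int : ∫ t in (0:ℝ)..1, (deriv γ t).1 = 1 := by
    have := intervalIntegral.intervalIntegral_re
      (hγ.contDiff.complexVelocity.continuous.intervalIntegrable (μ := volume) 0 1)
    simpa [hγ.integral_complexVelocity] using this
  rw [Length, integral_Icc_eq_integral_Ioc, ← intervalIntegral.integral_of_le zero_le_one]
  calc 1 = ∫ t in (0:ℝ)..1, (deriv γ t).1 := hx_int.symm
    _ < ∫ t in (0:ℝ)..1, ‖deriv γ t‖ :=
      intervalIntegral.integral_lt_integral_of_continuousOn_of_le_of_exists_lt zero_lt_one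
        (continuous_fst.comp hF).continuousOn hF.norm.continuousOn
        (fun t _ => (Real.le_norm_self (deriv γ t).1).trans (norm_fst_le _))
        ⟨t₀, ht₀, hx.trans_lt (norm_pos_iff.2 (hγ.deriv_ne_zero t₀ ht₀))⟩

theorem pi_le_totalCurvature (hγ : Admissible ψ γ) (hng : ¬ IsGraph γ) :
    π ≤ totalCurvature γ := by
  obtain ⟨t₀, ht₀, hx⟩ := exists_deriv_fst_nonpos_of_not_isGraph hng
  have hz := hγ.contDiff.complexVelocity
  have hne : ∀ t ∈ Icc (0:ℝ) 1, complexVelocity γ t ≠ 0 := fun t ht =>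
    complexVelocity_ne_zero (hγ.deriv_ne_zero t ht)
  have hturn := pi_le_integral_abs_im_logDeriv hz zero_lt_one hne
    (by simp [complexVelocity, hγ.deriv_zero_eq_deriv_one]) ht₀
    (by simpa [hγ.integral_complexVelocity] using hx)
  rw [intervalIntegral.integral_of_le zero_le_one, ← integral_Icc_eq_integral_Ioc] at hturn
  refine hturn.trans (setIntegral_mono_on ?_ hγ.integrableOn_abs_curvature_mul_norm
    measurableSet_Icc fun t ht => abs_im_logDeriv_complexVelocity_le γ (hγ.deriv_ne_zero t ht))
  exact (Complex.continuous_im.comp_continuousOn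
    (hz.continuousOn_logDeriv.mono hne)).abs.integrableOn_Icc

theorem energy_eq (hψ : Continuous ψ) (hγ : Admissible ψ γ) (α ε : ℝ) :
    Energy ψ α ε γ = ε ^ 2 * bendingEnergy γ + contactEnergy ψ α γ := by
  rw [Energy, bendingEnergy, contactEnergy, ← integral_const_mul,
    ← integral_add (hγ.integrableOn_curvature_sq_mul_norm.const_mul _)
      (hγ.integrableOn_contactPotential_mul_norm hψ α)]
  congr 1
  ext t
  ring

theorem mul_length_le_contactEnergy (hψ : Continuous ψ) (hγ : Admissible ψ γ) {α : ℝ}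
    (hα : α ≤ 1) : α * Length γ ≤ contactEnergy ψ α γ := by
  rw [Length, ← integral_const_mul]
  exact integral_mono (hγ.integrableOn_norm_deriv.const_mul α)
    (hγ.integrableOn_contactPotential_mul_norm hψ α)
    fun t => mul_le_mul_of_nonneg_right (le_contactPotential hα _) (norm_nonneg _)

theorem two_mul_totalCurvature_sub_le_bendingEnergy (hγ : Admissible ψ γ) (c : ℝ) :
    2 * c * totalCurvature γ - c ^ 2 * Length γ ≤ bendingEnergy γ :=
  two_mul_integral_abs_mul_sub_le_integral_sq_mul (ae_of_all _ fun _ => norm_nonneg _)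
    hγ.integrableOn_abs_curvature_mul_norm hγ.integrableOn_curvature_sq_mul_norm
    hγ.integrableOn_norm_deriv c

end Admissible

theorem nongraph_energy_lower_bound_general (ψ : ℝ → ℝ) (hψ : Continuous ψ)
    (α ε : ℝ) (hα : 0 < α) (hα1 : α < 1)
    (γ : ℝ → ℝ × ℝ) (hγ : Admissible ψ γ) (hng : ¬ IsGraph γ) :
    min 1 ((π ^ 2 * ε ^ 2 + 1) * α) < Energy ψ α ε γ := by
  have hL := hγ.one_lt_length hng
  have hT := hγ.pi_le_totalCurvature hng
  have hB := hγ.two_mul_totalCurvature_sub_le_bendingEnergy (π * α)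
  have hC := hγ.mul_length_le_contactEnergy hψ hα1.le
  have hB0 := bendingEnergy_nonneg γ
  rw [hγ.energy_eq hψ]
  rcases le_or_gt (α * Length γ) 1 with hshort | hlong
  · have hbend : π ^ 2 * α ≤ bendingEnergy γ := by
      have hT' : 2 * (π * α) * π ≤ 2 * (π * α) * totalCurvature γ :=
        mul_le_mul_of_nonneg_left hT (by positivity)
      nlinarith [mul_le_mul_of_nonneg_left hshort (by positivity : 0 ≤ π ^ 2 * α)]
    refine (min_le_right _ _).trans_lt ?_
    nlinarith [mul_le_mul_of_nonneg_left hbend (sq_nonneg ε)]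
  · refine (min_le_left _ _).trans_lt ?_
    nlinarith [mul_nonneg (sq_nonneg ε) hB0]

/-- Any non-graph admissible curve γ satisfies E[γ] > min{1, (π²ε² + 1)α}. -/
theorem nongraph_energy_lower_bound (ψ : ℝ → ℝ) (hψ : Continuous ψ)
    (hper : Function.Periodic ψ 1) (α ε : ℝ) (hα : 0 < α) (hα1 : α < 1) (hε : 0 < ε)
    (γ : ℝ → ℝ × ℝ) (hγ : Admissible ψ γ) (hng : ¬ IsGraph γ) :
    min 1 ((π ^ 2 * ε ^ 2 + 1) * α) < Energy ψ α ε γ :=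
  nongraph_energy_lower_bound_general ψ hψ α ε hα hα1 γ hγ hng

end
end

section
/- Any non-graph admissible curve γ satisfies E[γ] > 2πε√α. Consequently, if 4ε²α ≥ 1, any global minimizer of E is a graph curve. -/
open MeasureTheory Real Set

noncomputable section

/-!
Let `θ` be a continuous lift of the tangent angle of `γ`, so that `γ' = |γ'| (cos θ, sin θ)`
and `∫ |θ'|` is the total turning. Since `γ'(0) = γ'(1)`, `θ(1) - θ(0) ∈ 2πℤ`. If the total
turning were at most `π`, this forces `θ(1) = θ(0)`, and then every value of `θ` lies within
`π/2` of `θ(t₀)`, since the two arcs of `[0, 1]` between `t₀` and `t` carry opposite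
increments of `θ`. Then `⟨γ', (cos θ(t₀), sin θ(t₀))⟩ = |γ'| cos (θ - θ(t₀))` is nonnegative
and positive at `t₀`, while its integral is `⟨γ(1) - γ(0), (cos θ(t₀), sin θ(t₀))⟩ =
cos θ(t₀) ≤ 0` because `x'(t₀) ≤ 0`. So a non-graph curve turns by more than `π`.

Pointwise, `Θ ≥ α` and AM–GM give `ε²κ² + Θ ≥ 2ε√α |κ|`, and `|θ'| ≤ |κ| |γ'|`; integrating,
`E[γ] ≥ 2ε√α ∫ |θ'| > 2πε√α`. A horizontal line above `ψ` has energy `1`, which is less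
than `2πε√α` once `2ε√α ≥ 1`, so a minimizer cannot be a non-graph curve.
-/

section

open Complex ComplexConjugate

theorem two_mul_abs_integral_le_integral_abs_of_integral_eq_zero {f : ℝ → ℝ} {a b s w : ℝ}
    (hf : IntervalIntegrable f volume a b) (hzero : ∫ t in a..b, f t = 0)
    (hs : s ∈ Icc a b) (hw : w ∈ Icc a b) :
    2 * |∫ t in s..w, f t| ≤ ∫ t in a..b, |f t| := by
  wlog hsw : s ≤ w generalizing s w
  · rw [intervalIntegral.integral_symm, abs_neg]
    exact this hw hs (le_of_not_ge hsw)
  have ha : a ∈ Icc a b := left_mem_Icc.2 (hs.1.trans hs.2)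
  have hb : b ∈ Icc a b := right_mem_Icc.2 (hs.1.trans hs.2)
  have hsplit : ∀ g : ℝ → ℝ, IntervalIntegrable g volume a b →
      (∫ t in a..s, g t) + (∫ t in s..w, g t) + (∫ t in w..b, g t) = ∫ t in a..b, g t := by
    intro g hg
    have hsub : ∀ {c d}, c ∈ Icc a b → d ∈ Icc a b → IntervalIntegrable g volume c d :=
      fun hc hd => hg.mono_set (uIcc_subset_uIcc (Icc_subset_uIcc hc) (Icc_subset_uIcc hd))
    rw [intervalIntegral.integral_add_adjacent_intervals (hsub ha hs) (hsub hs hw),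
      intervalIntegral.integral_add_adjacent_intervals (hsub ha hw) (hsub hw hb)]
  have hsplit_f := hsplit f hf
  have hsplit_abs := hsplit (fun t => |f t|) hf.abs
  have hA := intervalIntegral.abs_integral_le_integral_abs (f := f) (μ := volume) hs.1
  have hB := intervalIntegral.abs_integral_le_integral_abs (f := f) (μ := volume) hsw
  have hC := intervalIntegral.abs_integral_le_integral_abs (f := f) (μ := volume) hw.2
  rw [hzero] at hsplit_f
  have hBAC : |∫ t in s..w, f t| ≤ |∫ t in a..s, f t| + |∫ t in w..b, f t| := by
    rw [show ∫ t in s..w, f t = -((∫ t in a..s, f t) + ∫ t in w..b, f t) by linarith, abs_neg]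
    exact abs_add_le _ _
  linarith

theorem eq_of_cexp_mul_I_eq_of_abs_sub_lt {x y : ℝ} (h : cexp (x * I) = cexp (y * I))
    (hxy : |x - y| < 2 * π) : x = y := by
  obtain ⟨n, hn⟩ := exp_eq_exp_iff_exists_int.1 h
  have hn' : x - y = n * (2 * π) := by
    have : x = y + n * (2 * π) := by simpa using congrArg im hn
    linarith
  have hn1 : |(n : ℝ)| < 1 := by
    rw [hn', abs_mul, abs_of_pos (by positivity : (0:ℝ) < 2 * π)] at hxy
    nlinarith [pi_pos]
  have hn0 : n = 0 := Int.abs_lt_one_iff.1 (by exact_mod_cast hn1)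
  rw [hn0, Int.cast_zero, zero_mul, sub_eq_zero] at hn'
  exact hn'

theorem eq_mul_cexp_integral_div {z z' : ℝ → ℂ} {s : Set ℝ} (hs : IsOpen s) (hs' : s.OrdConnected)
    (hz : ∀ t ∈ s, HasDerivAt z (z' t) t) (hz' : ContinuousOn z' s) (hne : ∀ t ∈ s, z t ≠ 0)
    {t₀ : ℝ} (ht₀ : t₀ ∈ s) : ∀ t ∈ s, z t = z t₀ * cexp (∫ u in t₀..t, z' u / z u) := by
  set F := fun t => ∫ u in t₀..t, z' u / z u
  have hcont : ContinuousOn (fun u => z' u / z u) s :=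
    hz'.div (fun t ht => (hz t ht).continuousAt.continuousWithinAt) hne
  have hF : ∀ t ∈ s, HasDerivAt F (z' t / z t) t := fun t ht =>
    intervalIntegral.integral_hasDerivAt_right
      (hcont.mono (hs'.uIcc_subset ht₀ ht)).intervalIntegrable
      (hcont.stronglyMeasurableAtFilter hs t ht) (hcont.continuousAt (hs.mem_nhds ht))
  have hG : ∀ t ∈ s, HasDerivAt (fun t => z t * cexp (-F t)) 0 t := by
    intro t ht
    refine ((hz t ht).mul (hF t ht).neg.cexp).congr_deriv ?_
    have hzt := hne t ht
    simp only [Pi.neg_apply]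
    field_simp
    ring
  intro t ht
  have hconst := hs.is_const_of_deriv_eq_zero hs'.isPreconnected
    (fun t ht => (hG t ht).differentiableAt.differentiableWithinAt) (fun t ht => (hG t ht).deriv)
    ht ht₀
  simp only [F, intervalIntegral.integral_same, neg_zero, Complex.exp_zero, mul_one] at hconst
  rw [← hconst, mul_assoc, ← Complex.exp_add, neg_add_cancel, Complex.exp_zero, mul_one]

theorem exists_angle_lift {z z' : ℝ → ℂ} {s : Set ℝ} (hs : IsOpen s) (hs' : s.OrdConnected)
    (hz : ∀ t ∈ s, HasDerivAt z (z' t) t) (hz' : ContinuousOn z' s) (hne : ∀ t ∈ s, z t ≠ 0)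
    {t₀ : ℝ} (ht₀ : t₀ ∈ s) :
    ∃ θ : ℝ → ℝ, (∀ t ∈ s, z t = ‖z t‖ * cexp (θ t * I)) ∧
      ∀ u ∈ s, ∀ w ∈ s, θ w - θ u = ∫ t in u..w, (z' t / z t).im := by
  have hcont : ContinuousOn (fun u => z' u / z u) s :=
    hz'.div (fun t ht => (hz t ht).continuousAt.continuousWithinAt) hne
  refine ⟨fun t => arg (z t₀) + (∫ u in t₀..t, z' u / z u).im, fun t ht => ?_,
    fun u hu w hw => ?_⟩
  · have hzt := eq_mul_cexp_integral_div hs hs' hz hz' hne ht₀ t ht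
    beta_reduce
    rw [hzt, norm_mul, Complex.norm_exp]
    generalize ∫ u in t₀..t, z' u / z u = w
    conv_lhs => rw [← norm_mul_exp_arg_mul_I (z t₀), ← re_add_im w]
    push_cast
    simp only [mul_assoc, ← Complex.exp_add]
    ring_nf
  · have hint : ∀ a ∈ s, IntervalIntegrable (fun u => z' u / z u) MeasureTheory.volume t₀ a :=
      fun a ha => (hcont.mono (hs'.uIcc_subset ht₀ ha)).intervalIntegrable
    simp only [add_sub_add_left_eq_sub, ← sub_im,
      intervalIntegral.integral_interval_sub_left (hint w hw) (hint u hu)]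
    exact (intervalIntegral.intervalIntegral_im
      (hcont.mono (hs'.uIcc_subset hu hw)).intervalIntegrable).symm

theorem abs_sub_le_pi_div_two_of_integral_abs_le_pi {θ ω : ℝ → ℝ} {a b : ℝ} (hab : a ≤ b)
    (hω : IntervalIntegrable ω volume a b)
    (hθ : ∀ u ∈ Icc a b, ∀ w ∈ Icc a b, θ w - θ u = ∫ t in u..w, ω t)
    (hper : cexp (θ b * I) = cexp (θ a * I)) (hK : ∫ t in a..b, |ω t| ≤ π)
    {s t : ℝ} (hs : s ∈ Icc a b) (ht : t ∈ Icc a b) : |θ t - θ s| ≤ π / 2 := by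
  have ha : a ∈ Icc a b := left_mem_Icc.2 hab
  have hb : b ∈ Icc a b := right_mem_Icc.2 hab
  have hclosed : ∫ t in a..b, ω t = 0 := by
    have hlt : |θ b - θ a| < 2 * π := by
      rw [hθ a ha b hb]
      linarith [intervalIntegral.abs_integral_le_integral_abs (f := ω) (μ := volume) hab, pi_pos]
    rw [← hθ a ha b hb, eq_of_cexp_mul_I_eq_of_abs_sub_lt hper hlt, sub_self]
  rw [hθ s hs t ht]
  linarith [two_mul_abs_integral_le_integral_abs_of_integral_eq_zero hω hclosed hs ht]

theorem re_mul_conj_integral_pos {z : ℝ → ℂ} {θ : ℝ → ℝ} {a b t₀ : ℝ} (hab : a < b)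
    (hz : Continuous z) (hpolar : ∀ t ∈ Icc a b, z t = ‖z t‖ * cexp (θ t * I))
    (ht₀ : t₀ ∈ Icc a b) (hz₀ : z t₀ ≠ 0) (hθ : ∀ t ∈ Icc a b, |θ t - θ t₀| ≤ π / 2) :
    0 < (z t₀ * conj (∫ t in a..b, z t)).re := by
  set g : ℝ → ℝ := fun t => (z t).re * Real.cos (θ t₀) + (z t).im * Real.sin (θ t₀)
  have hg : ∀ t ∈ Icc a b, g t = ‖z t‖ * Real.cos (θ t - θ t₀) := by
    intro t ht
    simp only [g]
    conv_lhs => rw [hpolar t ht]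
    simp only [re_ofReal_mul, im_ofReal_mul, exp_ofReal_mul_I_re, exp_ofReal_mul_I_im,
      Real.cos_sub]
    ring
  have hpos : 0 < ∫ t in a..b, g t := by
    refine intervalIntegral.integral_pos hab (by fun_prop) (fun t ht => ?_) ⟨t₀, ht₀, ?_⟩
    · have hθt := abs_le.1 (hθ t (Ioc_subset_Icc_self ht))
      rw [hg t (Ioc_subset_Icc_self ht)]
      exact mul_nonneg (norm_nonneg _)
        (Real.cos_nonneg_of_mem_Icc ⟨by linarith [hθt.1], by linarith [hθt.2]⟩)
    · rw [hg t₀ ht₀, sub_self, Real.cos_zero, mul_one]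
      exact norm_pos_iff.2 hz₀
  have hzi : IntervalIntegrable z volume a b := hz.intervalIntegrable a b
  have hre : ∫ t in a..b, (z t).re = (∫ t in a..b, z t).re :=
    intervalIntegral.intervalIntegral_re hzi
  have him : ∫ t in a..b, (z t).im = (∫ t in a..b, z t).im :=
    intervalIntegral.intervalIntegral_im hzi
  have hgint : ∫ t in a..b, g t =
      (∫ t in a..b, z t).re * Real.cos (θ t₀) + (∫ t in a..b, z t).im * Real.sin (θ t₀) := by
    rw [intervalIntegral.integral_add, intervalIntegral.integral_mul_const,
      intervalIntegral.integral_mul_const, hre, him]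
    · exact ((continuous_re.comp hz).intervalIntegrable _ _).mul_const _
    · exact ((continuous_im.comp hz).intervalIntegrable _ _).mul_const _
  have hchord : (z t₀ * conj (∫ t in a..b, z t)).re = ‖z t₀‖ * ∫ t in a..b, g t := by
    rw [hgint]
    conv_lhs => rw [hpolar t₀ ht₀]
    simp only [mul_re, im_ofReal_mul, exp_ofReal_mul_I_re, exp_ofReal_mul_I_im, conj_re,
      conj_im, ofReal_re, ofReal_im]
    ring
  rw [hchord]
  exact mul_pos (norm_pos_iff.2 hz₀) hpos

theorem pi_lt_integral_abs_im_div {z z' : ℝ → ℂ} {a b t₀ : ℝ} (hab : a < b)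
    (hz : ∀ t, HasDerivAt z (z' t) t) (hz' : Continuous z') (hne : ∀ t ∈ Icc a b, z t ≠ 0)
    (hper : z a = z b) (ht₀ : t₀ ∈ Icc a b)
    (hdir : (z t₀ * conj (∫ t in a..b, z t)).re ≤ 0) :
    π < ∫ t in a..b, |(z' t / z t).im| := by
  have hzc : Continuous z := continuous_iff_continuousAt.2 fun t => (hz t).continuousAt
  have ha : a ∈ Icc a b := left_mem_Icc.2 hab.le
  have hb : b ∈ Icc a b := right_mem_Icc.2 hab.le
  -- An open interval around `[a, b]` on which `z ≠ 0`.
  have hIcc : Icc a b ⊆ connectedComponentIn {t | z t ≠ 0} a :=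
    isPreconnected_Icc.subset_connectedComponentIn ha hne
  obtain ⟨θ, hpolar, hθ⟩ := exists_angle_lift
    (isOpen_ne_fun hzc continuous_const).connectedComponentIn
    isPreconnected_connectedComponentIn.ordConnected (fun t _ => hz t) hz'.continuousOn
    (fun t ht => connectedComponentIn_subset _ _ ht) (hIcc ha)
  have hper' : cexp (θ b * I) = cexp (θ a * I) := by
    have hna : (‖z a‖ : ℂ) ≠ 0 := by exact_mod_cast norm_ne_zero_iff.2 (hne a ha)
    have hpb := hpolar b (hIcc hb)
    rw [← hper] at hpb
    exact mul_left_cancel₀ hna (hpb.symm.trans (hpolar a (hIcc ha)))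
  have hω : IntervalIntegrable (fun t => (z' t / z t).im) volume a b :=
    (continuous_im.comp_continuousOn (hz'.continuousOn.div hzc.continuousOn hne))
      |>.intervalIntegrable_of_Icc hab.le
  by_contra! hK
  have hhalf : ∀ t ∈ Icc a b, |θ t - θ t₀| ≤ π / 2 := fun t ht =>
    abs_sub_le_pi_div_two_of_integral_abs_le_pi hab.le hω
      (fun u hu w hw => hθ u (hIcc hu) w (hIcc hw)) hper' hK ht₀ ht
  exact (re_mul_conj_integral_pos hab hzc (fun t ht => hpolar t (hIcc ht)) ht₀ (hne t₀ ht₀)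
    hhalf).not_ge hdir

/-- The angular speed `θ'` of the tangent direction, `(x' y'' - y' x'') / (x'² + y'²)`. -/
def turningRate (γ : ℝ → ℝ × ℝ) (t : ℝ) : ℝ :=
  (equivRealProdCLM.symm (deriv (deriv γ) t) / equivRealProdCLM.symm (deriv γ t)).im

theorem hasDerivAt_equivRealProd_symm {f : ℝ → ℝ × ℝ} {t : ℝ} (hf : DifferentiableAt ℝ f t) :
    HasDerivAt (fun t => equivRealProdCLM.symm (f t)) (equivRealProdCLM.symm (deriv f t)) t :=
  (equivRealProdCLM.symm : ℝ × ℝ →L[ℝ] ℂ).hasFDerivAt.comp_hasDerivAt t hf.hasDerivAt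

-- `‖·‖` on `ℝ × ℝ` is the sup norm, so `curvature` is not the Euclidean curvature and this is
-- only an inequality.
theorem abs_turningRate_le (γ : ℝ → ℝ × ℝ) (t : ℝ) :
    |turningRate γ t| ≤ |curvature γ t| * ‖deriv γ t‖ := by
  unfold turningRate curvature
  generalize deriv γ t = v, deriv (deriv γ) t = w
  rcases eq_or_ne v 0 with rfl | hv
  · simp
  have hr : 0 < ‖v‖ := norm_pos_iff.2 hv
  have hQ : ‖v‖ ^ 2 ≤ v.1 ^ 2 + v.2 ^ 2 := by
    rw [Prod.norm_def, Real.norm_eq_abs, Real.norm_eq_abs]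
    rcases max_cases |v.1| |v.2| with ⟨h, -⟩ | ⟨h, -⟩ <;> rw [h, sq_abs] <;>
      nlinarith [sq_nonneg v.1, sq_nonneg v.2]
  have hdiv : (equivRealProdCLM.symm w / equivRealProdCLM.symm v).im =
      (v.1 * w.2 - v.2 * w.1) / (v.1 ^ 2 + v.2 ^ 2) := by
    simp only [div_im, equivRealProdCLM_symm_apply_im,
      equivRealProdCLM_symm_apply_re, normSq_apply]
    ring
  rw [hdiv, abs_div, abs_div, abs_of_nonneg (by positivity : (0:ℝ) ≤ v.1 ^ 2 + v.2 ^ 2),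
    abs_of_pos (pow_pos hr 3)]
  rw [show |v.1 * w.2 - v.2 * w.1| / ‖v‖ ^ 3 * ‖v‖ = |v.1 * w.2 - v.2 * w.1| / ‖v‖ ^ 2 by
    field_simp]
  exact div_le_div_of_nonneg_left (abs_nonneg _) (by positivity) hQ

theorem continuousOn_turningRate {γ : ℝ → ℝ × ℝ} (hγ : ContDiff ℝ 2 γ) {s : Set ℝ}
    (hne : ∀ t ∈ s, deriv γ t ≠ 0) : ContinuousOn (turningRate γ) s := by
  have h1 : Continuous (deriv γ) := hγ.continuous_deriv (by norm_num)
  have h2 : Continuous (deriv (deriv γ)) := (hγ.deriv' (n := 1)).continuous_deriv_one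
  refine continuous_im.comp_continuousOn (ContinuousOn.div (by fun_prop) (by fun_prop) ?_)
  intro t ht
  exact equivRealProdCLM.symm.map_ne_zero_iff.2 (hne t ht)

theorem measurable_contactPotential_comp {ψ : ℝ → ℝ} (hψ : Continuous ψ) (α : ℝ) {γ : ℝ → ℝ × ℝ}
    (hγ : Continuous γ) : Measurable fun t => contactPotential ψ α (γ t) :=
  Measurable.ite
    (isClosed_eq (continuous_snd.comp hγ) (hψ.comp (continuous_fst.comp hγ))).measurableSet
    measurable_const measurable_const

theorem continuousOn_curvature {γ : ℝ → ℝ × ℝ} (hγ : ContDiff ℝ 2 γ) {s : Set ℝ}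
    (hne : ∀ t ∈ s, deriv γ t ≠ 0) : ContinuousOn (curvature γ) s := by
  have h1 : Continuous (deriv γ) := hγ.continuous_deriv (by norm_num)
  have h2 : Continuous (deriv (deriv γ)) := (hγ.deriv' (n := 1)).continuous_deriv_one
  refine ContinuousOn.div (by fun_prop) (by fun_prop) fun t ht => ?_
  exact pow_ne_zero _ (norm_ne_zero_iff.2 (hne t ht))

theorem integrableOn_energy_integrand {ψ : ℝ → ℝ} (hψ : Continuous ψ) (α ε : ℝ) {γ : ℝ → ℝ × ℝ}
    (hγ : ContDiff ℝ 2 γ) (hne : ∀ t ∈ Icc (0:ℝ) 1, deriv γ t ≠ 0) :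
    IntegrableOn (fun t => (ε ^ 2 * curvature γ t ^ 2 + contactPotential ψ α (γ t)) * ‖deriv γ t‖)
      (Icc 0 1) := by
  refine IntegrableOn.mul_continuousOn ?_ (hγ.continuous_deriv (by norm_num)).norm.continuousOn
    isCompact_Icc
  refine (((continuousOn_curvature hγ hne).pow 2).const_smul (ε ^ 2)).integrableOn_Icc.add ?_
  refine IntegrableOn.of_bound (by simp)
    (measurable_contactPotential_comp hψ α hγ.continuous).aestronglyMeasurable (|α| + 1)
    (ae_of_all _ fun t => ?_)
  unfold contactPotential
  split_ifs <;> simp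

theorem mul_integral_abs_turningRate_le_energy {ψ : ℝ → ℝ} (hψ : Continuous ψ) {α ε : ℝ}
    (hα : 0 ≤ α) (hα1 : α ≤ 1) (hε : 0 ≤ ε) {γ : ℝ → ℝ × ℝ} (hγ : ContDiff ℝ 2 γ)
    (hne : ∀ t ∈ Icc (0:ℝ) 1, deriv γ t ≠ 0) :
    2 * ε * √α * ∫ t in (0:ℝ)..1, |turningRate γ t| ≤ Energy ψ α ε γ := by
  rw [← intervalIntegral.integral_const_mul, intervalIntegral.integral_of_le zero_le_one,
    ← integral_Icc_eq_integral_Ioc]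
  refine setIntegral_mono_on ((continuousOn_turningRate hγ hne).abs.const_smul
    (2 * ε * √α)).integrableOn_Icc (integrableOn_energy_integrand hψ α ε hγ hne)
    measurableSet_Icc fun t _ => ?_
  have hΘ : α ≤ contactPotential ψ α (γ t) := by
    unfold contactPotential
    split_ifs <;> linarith
  have hamgm : 2 * ε * √α * |curvature γ t| ≤ ε ^ 2 * curvature γ t ^ 2 + α := by
    nlinarith [sq_nonneg (ε * |curvature γ t| - √α), Real.sq_sqrt hα, sq_abs (curvature γ t)]
  calc 2 * ε * √α * |turningRate γ t|
      ≤ 2 * ε * √α * (|curvature γ t| * ‖deriv γ t‖) :=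
        mul_le_mul_of_nonneg_left (abs_turningRate_le γ t) (by positivity)
    _ = 2 * ε * √α * |curvature γ t| * ‖deriv γ t‖ := by ring
    _ ≤ (ε ^ 2 * curvature γ t ^ 2 + contactPotential ψ α (γ t)) * ‖deriv γ t‖ :=
        mul_le_mul_of_nonneg_right (by linarith) (norm_nonneg _)

theorem pi_lt_integral_abs_turningRate {ψ : ℝ → ℝ} {γ : ℝ → ℝ × ℝ} (hγ : Admissible ψ γ)
    (hng : ¬ IsGraph γ) : π < ∫ t in (0:ℝ)..1, |turningRate γ t| := by
  obtain ⟨hC2, hne, -, hx0, hx1, hy, hdper⟩ := hγ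
  simp only [IsGraph, not_forall, not_lt] at hng
  obtain ⟨t₀, ht₀, hx't₀⟩ := hng
  have h1 : Continuous (deriv γ) := hC2.continuous_deriv (by norm_num)
  have h2 : Continuous (deriv (deriv γ)) := (hC2.deriv' (n := 1)).continuous_deriv_one
  have hchord : ∫ t in (0:ℝ)..1, equivRealProdCLM.symm (deriv γ t) = 1 := by
    rw [intervalIntegral.integral_eq_sub_of_hasDerivAt
      (fun t _ => hasDerivAt_equivRealProd_symm (hC2.differentiable (by norm_num) t))
      ((equivRealProdCLM.symm.continuous.comp h1).intervalIntegrable 0 1)]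
    apply Complex.ext <;> simp [hx0, hx1, hy]
  refine pi_lt_integral_abs_im_div zero_lt_one
    (fun t => hasDerivAt_equivRealProd_symm (hC2.differentiable_deriv_two t)) (by fun_prop)
    (fun t ht => equivRealProdCLM.symm.map_ne_zero_iff.2 (hne t ht)) (by rw [hdper]) ht₀ ?_
  simpa [hchord] using hx't₀

theorem exists_admissible_energy_eq_one {ψ : ℝ → ℝ} (hψ : Continuous ψ) (α ε : ℝ) :
    ∃ ℓ : ℝ → ℝ × ℝ, Admissible ψ ℓ ∧ Energy ψ α ε ℓ = 1 := by
  obtain ⟨M, hM⟩ := (isCompact_Icc (a := (0:ℝ)) (b := 1)).bddAbove_image hψ.continuousOn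
  have hderiv : deriv (fun t : ℝ => (t, M + 1)) = fun _ => ((1:ℝ), (0:ℝ)) :=
    funext fun t => ((hasDerivAt_id t).prodMk (hasDerivAt_const t (M + 1))).deriv
  have hbelow : ∀ t ∈ Icc (0:ℝ) 1, ψ t < M + 1 := fun t ht =>
    (hM (mem_image_of_mem ψ ht)).trans_lt (lt_add_one M)
  refine ⟨fun t => (t, M + 1), ⟨contDiff_id.prodMk contDiff_const, fun t _ => ?_,
    fun t ht => (hbelow t ht).le, rfl, rfl, rfl, by rw [hderiv]⟩, ?_⟩
  · simp [hderiv]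
  · rw [Energy, setIntegral_congr_fun measurableSet_Icc (g := fun _ => (1:ℝ)) fun t ht => ?_]
    · simp
    · simp [curvature, hderiv, contactPotential, (hbelow t ht).ne']

end

theorem nongraph_amgm_bound_general (ψ : ℝ → ℝ) (hψ : Continuous ψ)
    (α ε : ℝ) (hα : 0 < α) (hα1 : α < 1) (hε : 0 < ε) :
    (∀ γ : ℝ → ℝ × ℝ, Admissible ψ γ → ¬ IsGraph γ →
      2 * π * ε * Real.sqrt α < Energy ψ α ε γ) ∧
    (4 * ε ^ 2 * α ≥ 1 → ∀ γ : ℝ → ℝ × ℝ, Admissible ψ γ →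
      (∀ γ' : ℝ → ℝ × ℝ, Admissible ψ γ' → Energy ψ α ε γ ≤ Energy ψ α ε γ') →
      IsGraph γ) := by
  have hlower : ∀ γ : ℝ → ℝ × ℝ, Admissible ψ γ → ¬ IsGraph γ →
      2 * π * ε * √α < Energy ψ α ε γ := fun γ hγ hng =>
    calc 2 * π * ε * √α = 2 * ε * √α * π := by ring
      _ < 2 * ε * √α * ∫ t in (0:ℝ)..1, |turningRate γ t| :=
        mul_lt_mul_of_pos_left (pi_lt_integral_abs_turningRate hγ hng) (by positivity)
      _ ≤ Energy ψ α ε γ :=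
        mul_integral_abs_turningRate_le_energy hψ hα.le hα1.le hε.le hγ.1 hγ.2.1
  refine ⟨hlower, fun h4 γ hγ hmin => ?_⟩
  by_contra hng
  obtain ⟨ℓ, hℓ, hEℓ⟩ := exists_admissible_energy_eq_one hψ α ε
  have hsq : (2 * ε * √α) ^ 2 = 4 * ε ^ 2 * α := by
    rw [mul_pow, Real.sq_sqrt hα.le]
    ring
  have hone : 1 ≤ 2 * ε * √α := by
    nlinarith [(by positivity : 0 < 2 * ε * √α)]
  nlinarith [hlower γ hγ hng, hmin ℓ hℓ, pi_gt_three]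

/-- Any non-graph admissible curve satisfies E[γ] > 2πε√α; consequently if
4ε²α ≥ 1 then any global minimizer of E is a graph curve. -/
theorem nongraph_amgm_bound (ψ : ℝ → ℝ) (hψ : Continuous ψ)
    (hper : Function.Periodic ψ 1) (α ε : ℝ) (hα : 0 < α) (hα1 : α < 1) (hε : 0 < ε) :
    (∀ γ : ℝ → ℝ × ℝ, Admissible ψ γ → ¬ IsGraph γ →
      2 * π * ε * Real.sqrt α < Energy ψ α ε γ) ∧
    (4 * ε ^ 2 * α ≥ 1 → ∀ γ : ℝ → ℝ × ℝ, Admissible ψ γ →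
      (∀ γ' : ℝ → ℝ × ℝ, Admissible ψ γ' → Energy ψ α ε γ ≤ Energy ψ α ε γ') →
      IsGraph γ) :=
  nongraph_amgm_bound_general ψ hψ α ε hα hα1 hε

end
end

section
/- Let ψ be C² and 1-periodic. The completely adhering graph curve γ̃(t) = (t, ψ(t)) satisfies E[γ̃] ≤ ε²‖ψ''‖_∞² + α(1 + (1/2)(‖ψ''‖_∞/2)²) = ((8ε² + α)/(8α) · ‖ψ''‖_∞² + 1)·α. -/
open MeasureTheory Real Set

noncomputable section

/-! Along the graph the contact potential is identically `α`, and the speed `N = ‖(1, ψ')‖`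
satisfies `1 ≤ N`, so the integrand `(ε²κ² + α) N = ε² ψ''² / N⁵ + α N` is at most
`ε² ψ''² + α N`. Since `ψ'` is `1`-periodic it vanishes at a maximum of `ψ`, hence within
distance `1/2` of every point, so the mean value theorem gives `|ψ'| ≤ ‖ψ''‖_∞ / 2` and
`N ≤ 1 + ψ'² / 2 ≤ 1 + (‖ψ''‖_∞ / 2)² / 2`. -/

namespace Function.Periodic

variable {f : ℝ → ℝ} {c : ℝ}

theorem deriv (hf : Periodic f c) : Periodic (deriv f) c := fun x => by
  rw [← deriv_comp_add_const, funext hf]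

theorem abs_le_ciSup_abs (hf : Periodic f c) (hc : c ≠ 0) (hcont : Continuous f) (x : ℝ) :
    |f x| ≤ ⨆ y, |f y| :=
  le_ciSup ((hf.comp abs).isBounded_of_continuous hc hcont.abs).bddAbove x

theorem exists_deriv_eq_zero (hf : Periodic f c) (hc : c ≠ 0) (hd : Differentiable ℝ f) :
    ∃ t₀, _root_.deriv f t₀ = 0 := by
  obtain ⟨_, ⟨t₀, rfl⟩, hmax⟩ :=
    (hf.compact_of_continuous hc hd.continuous).exists_isGreatest (range_nonempty f)
  exact ⟨t₀, IsLocalMax.deriv_eq_zero (Filter.Eventually.of_forall fun x => hmax ⟨x, rfl⟩)⟩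

theorem abs_le_of_eq_zero_of_abs_deriv_le (hf : Periodic f c) (hc : 0 < c)
    (hd : Differentiable ℝ f) {t₀ M : ℝ} (h₀ : f t₀ = 0) (hM : ∀ x, |_root_.deriv f x| ≤ M)
    (t : ℝ) : |f t| ≤ M * c / 2 := by
  set n := round ((t - t₀) / c)
  have hfs : f (t₀ + n * c) = 0 := by rw [hf.int_mul n t₀, h₀]
  have hts : |t - (t₀ + n * c)| ≤ c / 2 := by
    have h := abs_sub_round ((t - t₀) / c)
    rw [show t - (t₀ + n * c) = ((t - t₀) / c - n) * c by field_simp; ring, abs_mul,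
      abs_of_pos hc]
    nlinarith
  have hmvt := convex_univ.norm_image_sub_le_of_norm_deriv_le (fun x _ => hd x)
    (fun x _ => hM x) (mem_univ (t₀ + n * c)) (mem_univ t)
  rw [hfs, sub_zero, Real.norm_eq_abs, Real.norm_eq_abs] at hmvt
  have hM0 : 0 ≤ M := (abs_nonneg _).trans (hM 0)
  calc |f t| ≤ M * |t - (t₀ + n * c)| := hmvt
    _ ≤ M * (c / 2) := by gcongr
    _ = M * c / 2 := by ring

theorem abs_deriv_le_of_abs_deriv_deriv_le (hf : Periodic f c) (hc : 0 < c)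
    (hd : Differentiable ℝ f) (hd' : Differentiable ℝ (_root_.deriv f)) {M : ℝ}
    (hM : ∀ x, |_root_.deriv (_root_.deriv f) x| ≤ M) (t : ℝ) :
    |_root_.deriv f t| ≤ M * c / 2 :=
  have ⟨_, h₀⟩ := hf.exists_deriv_eq_zero hc.ne' hd
  hf.deriv.abs_le_of_eq_zero_of_abs_deriv_le hc hd' h₀ hM t

end Function.Periodic

-- `‖·‖` on `ℝ × ℝ` is the sup norm, so here `‖(1, y)‖ = max 1 |y|`.
theorem one_le_norm_one_prod (y : ℝ) : 1 ≤ ‖((1 : ℝ), y)‖ := by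
  simp [Prod.norm_def]

theorem norm_one_prod_le (y : ℝ) : ‖((1 : ℝ), y)‖ ≤ 1 + y ^ 2 / 2 := by
  rw [Prod.norm_def, norm_one, Real.norm_eq_abs]
  exact max_le (by nlinarith [sq_nonneg y]) (by nlinarith [sq_nonneg (|y| - 1), sq_abs y])

theorem bending_density_le {ε α k N K L : ℝ} (hα : 0 ≤ α) (hN : 1 ≤ N) (hNL : N ≤ L)
    (hk : |k| ≤ K) : (ε ^ 2 * (k / N ^ 3) ^ 2 + α) * N ≤ ε ^ 2 * K ^ 2 + α * L := by
  have hk2 : k ^ 2 ≤ K ^ 2 := sq_le_sq' (neg_le_of_abs_le hk) (le_of_abs_le hk)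
  have hN5 : k ^ 2 / N ^ 5 ≤ K ^ 2 := (div_le_self (sq_nonneg k) (one_le_pow₀ hN)).trans hk2
  have hsplit : (ε ^ 2 * (k / N ^ 3) ^ 2 + α) * N = ε ^ 2 * (k ^ 2 / N ^ 5) + α * N := by
    field_simp
  rw [hsplit]
  gcongr

section GraphCurve

variable {ψ : ℝ → ℝ}

theorem deriv_graph (hψ : Differentiable ℝ ψ) :
    deriv (fun t => (t, ψ t)) = fun t => ((1 : ℝ), deriv ψ t) :=
  funext fun t => ((hasDerivAt_id t).prodMk (hψ t).hasDerivAt).deriv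

theorem curvature_graph (hψ : Differentiable ℝ ψ) (hψ' : Differentiable ℝ (deriv ψ)) (t : ℝ) :
    curvature (fun t => (t, ψ t)) t = deriv (deriv ψ) t / ‖((1 : ℝ), deriv ψ t)‖ ^ 3 := by
  have hγ'' : deriv (deriv fun t => (t, ψ t)) t = (0, deriv (deriv ψ) t) := by
    rw [deriv_graph hψ]
    exact ((hasDerivAt_const t (1 : ℝ)).prodMk (hψ' t).hasDerivAt).deriv
  rw [curvature, hγ'', deriv_graph hψ]
  simp

theorem energy_graph (hψ : Differentiable ℝ ψ) (hψ' : Differentiable ℝ (deriv ψ)) (α ε : ℝ) :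
    Energy ψ α ε (fun t => (t, ψ t)) = ∫ t in Icc (0 : ℝ) 1,
      (ε ^ 2 * (deriv (deriv ψ) t / ‖((1 : ℝ), deriv ψ t)‖ ^ 3) ^ 2 + α) *
        ‖((1 : ℝ), deriv ψ t)‖ := by
  simp only [Energy, curvature_graph hψ hψ', contactPotential, if_true, deriv_graph hψ]

end GraphCurve

theorem setIntegral_Icc_le_of_le {f : ℝ → ℝ} {a b C : ℝ} (hab : a ≤ b) (hf : Continuous f)
    (hC : ∀ t, f t ≤ C) : ∫ t in Icc a b, f t ≤ C * (b - a) := by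
  calc ∫ t in Icc a b, f t ≤ ∫ _ in Icc a b, C :=
        setIntegral_mono_on hf.integrableOn_Icc (integrableOn_const (by simp))
          measurableSet_Icc fun t _ => hC t
    _ = C * (b - a) := by simp [hab, mul_comm]

theorem adhering_competitor_energy_bound_general (ψ : ℝ → ℝ) (hψ : ContDiff ℝ 2 ψ)
    (hper : Function.Periodic ψ 1) (α ε : ℝ) (hα : 0 < α) :
    Energy ψ α ε (fun t => (t, ψ t)) ≤
        ε ^ 2 * (⨆ x : ℝ, |deriv (deriv ψ) x|) ^ 2 +
          α * (1 + (1 / 2) * ((⨆ x : ℝ, |deriv (deriv ψ) x|) / 2) ^ 2) ∧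
      ε ^ 2 * (⨆ x : ℝ, |deriv (deriv ψ) x|) ^ 2 +
          α * (1 + (1 / 2) * ((⨆ x : ℝ, |deriv (deriv ψ) x|) / 2) ^ 2) =
        ((8 * ε ^ 2 + α) / (8 * α) * (⨆ x : ℝ, |deriv (deriv ψ) x|) ^ 2 + 1) * α := by
  set M := ⨆ x : ℝ, |deriv (deriv ψ) x|
  have hψ₁ : Differentiable ℝ ψ := hψ.differentiable two_ne_zero
  have hψ₂ : Differentiable ℝ (deriv ψ) := hψ.differentiable_deriv_two
  have hM : ∀ x, |deriv (deriv ψ) x| ≤ M :=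
    hper.deriv.deriv.abs_le_ciSup_abs one_ne_zero (by fun_prop)
  have hslope : ∀ t, |deriv ψ t| ≤ M / 2 := by
    simpa using hper.abs_deriv_le_of_abs_deriv_deriv_le one_pos hψ₁ hψ₂ hM
  refine ⟨?_, by field_simp; ring⟩
  have hψ₁c : Continuous (deriv ψ) := hψ₂.continuous
  have hN : ∀ t, ‖((1 : ℝ), deriv ψ t)‖ ≠ 0 := fun t =>
    (zero_lt_one.trans_le (one_le_norm_one_prod _)).ne'
  rw [energy_graph hψ₁ hψ₂]
  refine (setIntegral_Icc_le_of_le (C := ε ^ 2 * M ^ 2 + α * (1 + 1 / 2 * (M / 2) ^ 2))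
    zero_le_one (by fun_prop (disch := exact fun t => pow_ne_zero 3 (hN t))) fun t => ?_).trans_eq
    (by ring)
  refine bending_density_le hα.le (one_le_norm_one_prod _) ((norm_one_prod_le _).trans ?_) (hM t)
  nlinarith [abs_nonneg (deriv ψ t), hslope t, sq_abs (deriv ψ t)]

/-- Energy bound for the completely adhering competitor γ̃(t) = (t, ψ(t)). -/
theorem adhering_competitor_energy_bound (ψ : ℝ → ℝ) (hψ : ContDiff ℝ 2 ψ)
    (hper : Function.Periodic ψ 1) (α ε : ℝ) (hα : 0 < α) (hα1 : α < 1) (hε : 0 < ε) :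
    Energy ψ α ε (fun t => (t, ψ t)) ≤
        ε ^ 2 * (⨆ x : ℝ, |deriv (deriv ψ) x|) ^ 2 +
          α * (1 + (1 / 2) * ((⨆ x : ℝ, |deriv (deriv ψ) x|) / 2) ^ 2) ∧
      ε ^ 2 * (⨆ x : ℝ, |deriv (deriv ψ) x|) ^ 2 +
          α * (1 + (1 / 2) * ((⨆ x : ℝ, |deriv (deriv ψ) x|) / 2) ^ 2) =
        ((8 * ε ^ 2 + α) / (8 * α) * (⨆ x : ℝ, |deriv (deriv ψ) x|) ^ 2 + 1) * α :=
  adhering_competitor_energy_bound_general ψ hψ hper α ε hα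

end
end

section
/- Define f(θ) = ∫₀^{|θ|} √(cos φ) dφ for θ ∈ (−π/2, π/2). Let u ∈ H²(a, b) satisfy u'(x₀) = 0 for some x₀ ∈ (a, b). Then the total squared curvature of the graph of u satisfies ∫ₐᵇ |u''|²/(1+u'²)^{5/2} dx ≥ [f(arctan u'(a)) + f(arctan u'(b))]²/(b−a). -/
/-!
Write `v = u'` and `W(t) = (1 + t²)^(-5/4)` (`slopeWeight`), so that `κ² ds = (v' · W(v))² dx`.
The substitution `t = tan φ` gives `f(arctan w) = |∫₀^w W|`, and the substitution `t = v(x)`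
together with `v(x₀) = 0` bounds `f(arctan v(a))` and `f(arctan v(b))` by `∫ |v'| W(v)` over
`[a, x₀]` and `[x₀, b]`. Adding the two bounds and applying Cauchy–Schwarz to `∫ₐᵇ |v'| W(v)`
gives the claim.
-/

open MeasureTheory Real Set

noncomputable section

/-- f(θ) = ∫₀^{|θ|} √(cos φ) dφ. -/
def fAngle (θ : ℝ) : ℝ := ∫ φ in (0:ℝ)..|θ|, Real.sqrt (Real.cos φ)

theorem fAngle_nonneg (θ : ℝ) : 0 ≤ fAngle θ :=
  intervalIntegral.integral_nonneg (abs_nonneg θ) fun _ _ => sqrt_nonneg _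

theorem integral_zero_abs_eq_abs_integral_of_even {h : ℝ → ℝ} (heven : h.Even)
    (hnonneg : ∀ x, 0 ≤ h x) (θ : ℝ) :
    ∫ x in (0:ℝ)..|θ|, h x = |∫ x in (0:ℝ)..θ, h x| := by
  rcases le_or_gt 0 θ with hθ | hθ
  · rw [abs_of_nonneg hθ,
      abs_of_nonneg (intervalIntegral.integral_nonneg hθ fun x _ => hnonneg x)]
  · have hneg : ∫ x in (0:ℝ)..θ, h x ≤ 0 := by
      rw [intervalIntegral.integral_symm, neg_nonpos]
      exact intervalIntegral.integral_nonneg hθ.le fun x _ => hnonneg x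
    rw [abs_of_neg hθ, abs_of_nonpos hneg, ← intervalIntegral.integral_symm]
    simpa only [heven _, neg_neg, neg_zero] using
      intervalIntegral.integral_comp_neg (a := 0) (b := -θ) h

def slopeWeight (t : ℝ) : ℝ := (1 + t ^ 2) ^ (-(5 / 4) : ℝ)

theorem slopeWeight_pos (t : ℝ) : 0 < slopeWeight t := by
  unfold slopeWeight; positivity

theorem continuous_slopeWeight : Continuous slopeWeight :=
  (by fun_prop : Continuous fun t : ℝ => 1 + t ^ 2).rpow_const fun _ => Or.inl (by positivity)

theorem slopeWeight_sq (t : ℝ) : slopeWeight t ^ 2 = ((1 + t ^ 2) ^ ((5:ℝ) / 2))⁻¹ := by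
  rw [slopeWeight, ← rpow_natCast, ← rpow_mul (by positivity), ← rpow_neg (by positivity)]
  norm_num

theorem sqrt_cos_eq_slopeWeight_tan {x : ℝ} (hx : 0 < cos x) :
    √(cos x) = 1 / cos x ^ 2 * slopeWeight (tan x) := by
  have htan : 1 + tan x ^ 2 = cos x ^ (-2 : ℝ) := by
    rw [rpow_neg hx.le, rpow_two, ← inv_one_add_tan_sq hx.ne', inv_inv]
  rw [slopeWeight, htan, ← rpow_mul hx.le, one_div, ← rpow_two, ← rpow_neg hx.le,
    ← rpow_add hx, sqrt_eq_rpow]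
  norm_num

theorem integral_sqrt_cos_arctan (c : ℝ) :
    ∫ φ in (0:ℝ)..arctan c, √(cos φ) = ∫ t in (0:ℝ)..c, slopeWeight t := by
  have hcos : ∀ x ∈ uIcc 0 (arctan c), 0 < cos x := fun x hx =>
    cos_pos_of_mem_Ioo <| ordConnected_Ioo.uIcc_subset (by simp [pi_pos]) (arctan_mem_Ioo c) hx
  have hsubst := intervalIntegral.integral_comp_mul_deriv
    (fun x hx => hasDerivAt_tan (hcos x hx).ne')
    (continuousOn_const.div (continuous_cos.continuousOn.pow 2)
      fun x hx => pow_ne_zero 2 (hcos x hx).ne') continuous_slopeWeight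
  rw [tan_zero, tan_arctan] at hsubst
  rw [← hsubst]
  refine intervalIntegral.integral_congr fun x hx => ?_
  simp only [Function.comp_apply, sqrt_cos_eq_slopeWeight_tan (hcos x hx), mul_comm]

theorem fAngle_arctan (c : ℝ) : fAngle (arctan c) = |∫ t in (0:ℝ)..c, slopeWeight t| := by
  rw [fAngle, integral_zero_abs_eq_abs_integral_of_even (fun x => by rw [cos_neg])
    (fun _ => sqrt_nonneg _), integral_sqrt_cos_arctan]

theorem abs_integral_slopeWeight_le {v v' : ℝ → ℝ} (hv : ∀ x, HasDerivAt v (v' x) x)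
    (hv' : Continuous v') {p q : ℝ} (hpq : p ≤ q) :
    |∫ t in v p..v q, slopeWeight t| ≤ ∫ x in p..q, |v' x| * slopeWeight (v x) := by
  rw [← intervalIntegral.integral_comp_mul_deriv (fun x _ => hv x) hv'.continuousOn
    continuous_slopeWeight]
  refine (intervalIntegral.abs_integral_le_integral_abs hpq).trans_eq
    (intervalIntegral.integral_congr fun x _ => ?_)
  simp only [Function.comp_apply, abs_mul, abs_of_pos (slopeWeight_pos _), mul_comm]

theorem fAngle_arctan_add_le {v v' : ℝ → ℝ} (hv : ∀ x, HasDerivAt v (v' x) x)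
    (hv' : Continuous v') {a b x₀ : ℝ} (hx₀ : x₀ ∈ Icc a b) (hv₀ : v x₀ = 0) :
    fAngle (arctan (v a)) + fAngle (arctan (v b)) ≤
      ∫ x in a..b, |v' x| * slopeWeight (v x) := by
  have hvc : Continuous v := continuous_iff_continuousAt.2 fun x => (hv x).continuousAt
  have hint : Continuous fun x => |v' x| * slopeWeight (v x) :=
    hv'.abs.mul (continuous_slopeWeight.comp hvc)
  rw [← intervalIntegral.integral_add_adjacent_intervals (b := x₀)
    (hint.intervalIntegrable _ _) (hint.intervalIntegrable _ _)]
  refine add_le_add ?_ ?_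
  · have := abs_integral_slopeWeight_le hv hv' hx₀.1
    rwa [hv₀, intervalIntegral.integral_symm, abs_neg, ← fAngle_arctan] at this
  · have := abs_integral_slopeWeight_le hv hv' hx₀.2
    rwa [hv₀, ← fAngle_arctan] at this

theorem sq_integral_div_le_integral_sq {F : ℝ → ℝ} {a b : ℝ} (hab : a < b)
    (hF : IntervalIntegrable F volume a b)
    (hF2 : IntervalIntegrable (fun x => F x ^ 2) volume a b) :
    (∫ x in a..b, F x) ^ 2 / (b - a) ≤ ∫ x in a..b, F x ^ 2 := by
  have hba : 0 < b - a := sub_pos.mpr hab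
  have hvol : volume.real (Ioc a b) = b - a := by simp [hab.le]
  have jensen := (even_two.convexOn_pow (𝕜 := ℝ)).map_set_average_le (continuousOn_pow 2)
    isClosed_univ (by simp [hab]) (by simp) (by simp) hF.1 hF2.1
  simp only [setAverage_eq, hvol, smul_eq_mul, ← intervalIntegral.integral_of_le hab.le]
    at jensen
  rw [div_le_iff₀ hba]
  calc (∫ x in a..b, F x) ^ 2
      = ((b - a)⁻¹ * ∫ x in a..b, F x) ^ 2 * (b - a) * (b - a) := by field_simp
    _ ≤ (b - a)⁻¹ * (∫ x in a..b, F x ^ 2) * (b - a) * (b - a) := by gcongr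
    _ = (∫ x in a..b, F x ^ 2) * (b - a) := by field_simp

/-- Graph version of the curvature lower bound (Lemma 1). -/
theorem graph_curvature_lower_bound (u : ℝ → ℝ) (a b x₀ : ℝ) (hab : a < b)
    (hu : ContDiff ℝ 2 u) (hx₀ : x₀ ∈ Ioo a b) (h0 : deriv u x₀ = 0) :
    (fAngle (arctan (deriv u a)) + fAngle (arctan (deriv u b))) ^ 2 / (b - a) ≤
      ∫ x in a..b, |deriv (deriv u) x| ^ 2 / (1 + (deriv u x) ^ 2) ^ ((5:ℝ)/2) := by
  obtain ⟨hv, hv'⟩ := contDiff_one_iff_deriv.mp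
    (contDiff_succ_iff_deriv.mp (hu : ContDiff ℝ (1 + 1) u)).2.2
  set F := fun x => |deriv (deriv u) x| * slopeWeight (deriv u x)
  have hF : Continuous F := hv'.abs.mul (continuous_slopeWeight.comp hv.continuous)
  have hsum := fAngle_arctan_add_le (fun x => (hv x).hasDerivAt) hv'
    (Ioo_subset_Icc_self hx₀) h0
  have hFsq (x : ℝ) :
      F x ^ 2 = |deriv (deriv u) x| ^ 2 / (1 + deriv u x ^ 2) ^ ((5:ℝ)/2) := by
    rw [mul_pow, slopeWeight_sq, ← div_eq_mul_inv]
  calc _ ≤ (∫ x in a..b, F x) ^ 2 / (b - a) := by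
        gcongr
        exact add_nonneg (fAngle_nonneg _) (fAngle_nonneg _)
    _ ≤ ∫ x in a..b, F x ^ 2 := sq_integral_div_le_integral_sq hab
        (hF.intervalIntegrable _ _) ((hF.pow 2).intervalIntegrable _ _)
    _ = _ := by simp only [hFsq]

end
end
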